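/- Suppose there exist a constant C > 0 and a non-negative sesquilinear form c on H such that (i) c is ‖·‖_θ-compact for every θ ∈ Θ, i.e. every sequence (u_m) in H that is bounded in ‖·‖_θ has a subsequence (u_{m_k}) and an element u ∈ H with c[u_{m_k} − u] → 0, and (ii) ‖w‖_θ² ≤ C a_θ[w] + c[w] for all w ∈ W_θ and all θ ∈ Θ (assumption (H1′)). Then the gap condition (H1) holds: for every θ ∈ Θ there exists ν_θ > 0 such that a_θ[w] ≥ ν_θ ‖w‖_θ² for all w ∈ W_θ. -/

import Mathlib

noncomputable section

open scoped Classical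

/-- An abstract family of non-negative bounded sesquilinear forms `a θ`, `b θ`
(linear in the first argument, conjugate-linear in the second) on a complex Hilbert
space `H`, parametrised by `θ` in a compact subset `Θ` of `ℝⁿ`, such that
`(·,·)_θ := a θ + b θ` is a family of inner products whose norms are equivalent
to the norm of `H`. -/
structure FormFamily (n : ℕ) (H : Type*) [NormedAddCommGroup H] [InnerProductSpace ℂ H]
    [CompleteSpace H] where
  Θ : Set (EuclideanSpace ℝ (Fin n))
  compactΘ : IsCompact Θ
  a : EuclideanSpace ℝ (Fin n) → H → H → ℂ
  b : EuclideanSpace ℝ (Fin n) → H → H → ℂ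
  a_addL : ∀ θ ∈ Θ, ∀ u v w : H, a θ (u + v) w = a θ u w + a θ v w
  a_smulL : ∀ θ ∈ Θ, ∀ (c : ℂ) (u w : H), a θ (c • u) w = c * a θ u w
  a_addR : ∀ θ ∈ Θ, ∀ u v w : H, a θ u (v + w) = a θ u v + a θ u w
  a_smulR : ∀ θ ∈ Θ, ∀ (c : ℂ) (u w : H), a θ u (c • w) = starRingEnd ℂ c * a θ u w
  a_nonneg : ∀ θ ∈ Θ, ∀ u : H, 0 ≤ (a θ u u).re
  a_im : ∀ θ ∈ Θ, ∀ u : H, (a θ u u).im = 0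
  a_bdd : ∀ θ ∈ Θ, ∃ C : ℝ, ∀ u w : H, ‖a θ u w‖ ≤ C * ‖u‖ * ‖w‖
  b_addL : ∀ θ ∈ Θ, ∀ u v w : H, b θ (u + v) w = b θ u w + b θ v w
  b_smulL : ∀ θ ∈ Θ, ∀ (c : ℂ) (u w : H), b θ (c • u) w = c * b θ u w
  b_addR : ∀ θ ∈ Θ, ∀ u v w : H, b θ u (v + w) = b θ u v + b θ u w
  b_smulR : ∀ θ ∈ Θ, ∀ (c : ℂ) (u w : H), b θ u (c • w) = starRingEnd ℂ c * b θ u w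
  b_nonneg : ∀ θ ∈ Θ, ∀ u : H, 0 ≤ (b θ u u).re
  b_im : ∀ θ ∈ Θ, ∀ u : H, (b θ u u).im = 0
  b_bdd : ∀ θ ∈ Θ, ∃ C : ℝ, ∀ u w : H, ‖b θ u w‖ ≤ C * ‖u‖ * ‖w‖
  equivNorm : ∀ θ ∈ Θ, ∃ c₁ c₂ : ℝ, 0 < c₁ ∧ ∀ u : H,
    c₁ * ‖u‖ ^ 2 ≤ (a θ u u).re + (b θ u u).re ∧
      (a θ u u).re + (b θ u u).re ≤ c₂ * ‖u‖ ^ 2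

namespace FormFamily

variable {n : ℕ} {H : Type*} [NormedAddCommGroup H] [InnerProductSpace ℂ H] [CompleteSpace H]

/-- The inner product `(u, w)_θ := a θ u w + b θ u w`. -/
def ip (S : FormFamily n H) (θ : EuclideanSpace ℝ (Fin n)) (u w : H) : ℂ :=
  S.a θ u w + S.b θ u w

/-- The squared `θ`-norm `‖u‖_θ ^ 2 = (u, u)_θ`. -/
def nsq (S : FormFamily n H) (θ : EuclideanSpace ℝ (Fin n)) (u : H) : ℝ :=
  (S.ip θ u u).re

/-- The `θ`-norm `‖u‖_θ`. -/
def nrm (S : FormFamily n H) (θ : EuclideanSpace ℝ (Fin n)) (u : H) : ℝ :=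
  Real.sqrt (S.nsq θ u)

/-- The degeneracy subspace `V_θ = {v : a_θ[v] = 0}`. -/
def V (S : FormFamily n H) (θ : EuclideanSpace ℝ (Fin n)) : Set H :=
  {v : H | S.a θ v v = 0}

/-- `W_θ`, the orthogonal complement of `V_θ` in `H` with respect to `(·,·)_θ`. -/
def W (S : FormFamily n H) (θ : EuclideanSpace ℝ (Fin n)) : Set H :=
  {w : H | ∀ v ∈ S.V θ, S.ip θ w v = 0}

end FormFamily

/-- `f : H → ℂ` is a bounded conjugate-linear functional. -/
def IsBddConjLinear {H : Type*} [NormedAddCommGroup H] [InnerProductSpace ℂ H]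
    (f : H → ℂ) : Prop :=
  (∀ u v : H, f (u + v) = f u + f v) ∧
    (∀ (c : ℂ) (u : H), f (c • u) = starRingEnd ℂ c * f u) ∧
    ∃ C : ℝ, ∀ u : H, ‖f u‖ ≤ C * ‖u‖

/-- The homogenised form `a^h_θ(v,vt) = a''₀(v,vt)θ·θ - a₀(N_θ v, N_θ vt)`. -/
def ahom {n : ℕ} {H : Type*} [NormedAddCommGroup H] [InnerProductSpace ℂ H] [CompleteSpace H]
    (S : FormFamily n H) (a'' : H → H → Fin n → Fin n → ℂ)
    (N : EuclideanSpace ℝ (Fin n) → H → H) (θ : EuclideanSpace ℝ (Fin n)) (v vt : H) : ℂ :=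
  (∑ j, ∑ k, a'' v vt j k * (θ j : ℂ) * (θ k : ℂ)) - S.a 0 (N θ v) (N θ vt)

/-! If the gap fails at `θ`, there are `u_m ∈ W_θ` with `‖u_m‖_θ = 1` and `a_θ[u_m] → 0`. By
compactness of `c`, along a subsequence `c[u_m - x] → 0` for some `x`; then (H1′) applied to the
differences `u_k - u_l ∈ W_θ` makes the subsequence Cauchy. Its limit `y` has `a_θ[y] = 0`, so
`y ∈ V_θ` is `(·,·)_θ`-orthogonal to every `u_m`, whence `‖y‖_θ = 0`, contradicting
`‖y‖_θ = lim ‖u_m‖_θ = 1`. -/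

open Filter Topology

theorem cauchySeq_of_dist_sq_le {α : Type*} [PseudoMetricSpace α] {v : ℕ → α} {g : ℕ → ℝ}
    (hg : Tendsto g atTop (𝓝 0)) (h : ∀ k l, dist (v k) (v l) ^ 2 ≤ g k + g l) :
    CauchySeq v := by
  refine Metric.cauchySeq_iff'.2 fun ε hε => ?_
  obtain ⟨N, hN⟩ := eventually_atTop.1 (hg.eventually (gt_mem_nhds (half_pos (pow_pos hε 2))))
  refine ⟨N, fun k hk => lt_of_pow_lt_pow_left₀ 2 hε.le ?_⟩
  linarith [h k N, hN k hk, hN N le_rfl]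

section SesqForm

variable {E : Type*} [SeminormedAddCommGroup E] [NormedSpace ℂ E]

structure IsSesqForm (f : E → E → ℂ) : Prop where
  add_left : ∀ u v w : E, f (u + v) w = f u w + f v w
  smul_left : ∀ (t : ℂ) (u w : E), f (t • u) w = t * f u w
  add_right : ∀ u v w : E, f u (v + w) = f u v + f u w
  smul_right : ∀ (t : ℂ) (u w : E), f u (t • w) = starRingEnd ℂ t * f u w

namespace IsSesqForm

variable {f g : E → E → ℂ}

theorem add (hf : IsSesqForm f) (hg : IsSesqForm g) : IsSesqForm (f + g) where
  add_left u v w := by simp only [Pi.add_apply, hf.add_left, hg.add_left]; ring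
  smul_left t u w := by simp only [Pi.add_apply, hf.smul_left, hg.smul_left]; ring
  add_right u v w := by simp only [Pi.add_apply, hf.add_right, hg.add_right]; ring
  smul_right t u w := by simp only [Pi.add_apply, hf.smul_right, hg.smul_right]; ring

/-- Mathlib's bilinear-map API (`map_sub₂`, `mkContinuous₂`, `continuous₂`) wants maps linear
in both arguments, so we view a sesquilinear form as an `ℝ`-bilinear one. -/
def toBilinReal (hf : IsSesqForm f) : E →ₗ[ℝ] E →ₗ[ℝ] ℂ :=
  LinearMap.mk₂ ℝ f hf.add_left
    (fun r u w => by rw [← Complex.coe_smul, hf.smul_left, Complex.real_smul])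
    hf.add_right
    (fun r u w => by
      rw [← Complex.coe_smul, hf.smul_right, Complex.conj_ofReal, Complex.real_smul])

@[simp]
theorem toBilinReal_apply (hf : IsSesqForm f) (u w : E) : hf.toBilinReal u w = f u w := rfl

theorem sub_left (hf : IsSesqForm f) (u v w : E) : f (u - v) w = f u w - f v w :=
  LinearMap.map_sub₂ hf.toBilinReal u v w

theorem smul_left_real (hf : IsSesqForm f) (r : ℝ) (u w : E) : f (r • u) w = r * f u w := by
  rw [← Complex.real_smul]
  exact LinearMap.map_smul₂ hf.toBilinReal r u w

theorem re_smul_smul (hf : IsSesqForm f) (r : ℝ) (u : E) :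
    (f (r • u) (r • u)).re = r ^ 2 * (f u u).re := by
  simp [← Complex.coe_smul, hf.smul_left, hf.smul_right, sq, mul_assoc]

/-- Parallelogram law, with the `u + v` term dropped by non-negativity. -/
theorem re_sub_le (hf : IsSesqForm f) (hf0 : ∀ u, 0 ≤ (f u u).re) (u v : E) :
    (f (u - v) (u - v)).re ≤ 2 * (f u u).re + 2 * (f v v).re := by
  have hpar : f (u + v) (u + v) + f (u - v) (u - v) = 2 * f u u + 2 * f v v := by
    simp only [← hf.toBilinReal_apply, map_add, map_sub, LinearMap.add_apply,
      LinearMap.sub_apply]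
    ring
  have := congrArg Complex.re hpar
  simp only [Complex.add_re, Complex.mul_re, Complex.re_ofNat, Complex.im_ofNat] at this
  linarith [hf0 (u + v)]

theorem continuous (hf : IsSesqForm f) {M : ℝ} (hM : ∀ u w, ‖f u w‖ ≤ M * ‖u‖ * ‖w‖) :
    Continuous fun p : E × E => f p.1 p.2 :=
  (hf.toBilinReal.mkContinuous₂ M hM).continuous₂

end IsSesqForm

end SesqForm

namespace FormFamily

variable {n : ℕ} {H : Type*} [NormedAddCommGroup H] [InnerProductSpace ℂ H] [CompleteSpace H]
  (S : FormFamily n H) {θ : EuclideanSpace ℝ (Fin n)}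

theorem isSesqForm_a (hθ : θ ∈ S.Θ) : IsSesqForm (S.a θ) :=
  ⟨S.a_addL θ hθ, S.a_smulL θ hθ, S.a_addR θ hθ, S.a_smulR θ hθ⟩

theorem isSesqForm_b (hθ : θ ∈ S.Θ) : IsSesqForm (S.b θ) :=
  ⟨S.b_addL θ hθ, S.b_smulL θ hθ, S.b_addR θ hθ, S.b_smulR θ hθ⟩

theorem isSesqForm_ip (hθ : θ ∈ S.Θ) : IsSesqForm (S.ip θ) :=
  (S.isSesqForm_a hθ).add (S.isSesqForm_b hθ)

theorem continuous_a (hθ : θ ∈ S.Θ) : Continuous fun p : H × H => S.a θ p.1 p.2 :=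
  (S.isSesqForm_a hθ).continuous (S.a_bdd θ hθ).choose_spec

theorem continuous_ip (hθ : θ ∈ S.Θ) : Continuous fun p : H × H => S.ip θ p.1 p.2 :=
  (S.continuous_a hθ).add ((S.isSesqForm_b hθ).continuous (S.b_bdd θ hθ).choose_spec)

theorem nsq_eq (u : H) : S.nsq θ u = (S.a θ u u).re + (S.b θ u u).re := by
  simp [nsq, ip]

theorem nsq_smul (hθ : θ ∈ S.Θ) (r : ℝ) (u : H) : S.nsq θ (r • u) = r ^ 2 * S.nsq θ u :=
  (S.isSesqForm_ip hθ).re_smul_smul r u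

theorem sub_mem_W (hθ : θ ∈ S.Θ) {u v : H} (hu : u ∈ S.W θ) (hv : v ∈ S.W θ) :
    u - v ∈ S.W θ := fun z hz => by
  rw [(S.isSesqForm_ip hθ).sub_left, hu z hz, hv z hz, sub_zero]

theorem smul_mem_W (hθ : θ ∈ S.Θ) (r : ℝ) {u : H} (hu : u ∈ S.W θ) : r • u ∈ S.W θ :=
  fun z hz => by rw [(S.isSesqForm_ip hθ).smul_left_real, hu z hz, mul_zero]

theorem exists_seq_of_not_gap (hθ : θ ∈ S.Θ)
    (h : ∀ ν > 0, ∃ w ∈ S.W θ, (S.a θ w w).re < ν * S.nsq θ w) :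
    ∃ u : ℕ → H, (∀ m, u m ∈ S.W θ) ∧ (∀ m, S.nsq θ (u m) = 1) ∧
      Tendsto (fun m => (S.a θ (u m) (u m)).re) atTop (𝓝 0) := by
  choose w hwW hw using fun m : ℕ => h (1 / (m + 1)) (by positivity)
  have hpos m : 0 < S.nsq θ (w m) :=
    pos_of_mul_pos_right ((S.a_nonneg θ hθ _).trans_lt (hw m)) (by positivity)
  set r : ℕ → ℝ := fun m => (√(S.nsq θ (w m)))⁻¹
  have hr m : r m ^ 2 * S.nsq θ (w m) = 1 := by
    rw [inv_pow, Real.sq_sqrt (hpos m).le, inv_mul_cancel₀ (hpos m).ne']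
  refine ⟨fun m => r m • w m, fun m => S.smul_mem_W hθ _ (hwW m),
    fun m => by rw [S.nsq_smul hθ, hr], ?_⟩
  refine squeeze_zero (fun m => S.a_nonneg θ hθ _) (fun m => ?_)
    tendsto_one_div_add_atTop_nhds_zero_nat
  calc (S.a θ (r m • w m) (r m • w m)).re = r m ^ 2 * (S.a θ (w m) (w m)).re :=
        (S.isSesqForm_a hθ).re_smul_smul _ _
    _ ≤ r m ^ 2 * (1 / (m + 1) * S.nsq θ (w m)) := by gcongr; exact (hw m).le
    _ = 1 / (m + 1) := by rw [mul_left_comm, hr, mul_one]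

theorem cauchySeq_of_coercive_mod_compact (hθ : θ ∈ S.Θ) {C : ℝ} (hC : 0 ≤ C)
    {c : H → H → ℂ} (hc : IsSesqForm c) (hc0 : ∀ u, 0 ≤ (c u u).re)
    (hcoer : ∀ w ∈ S.W θ, S.nsq θ w ≤ C * (S.a θ w w).re + (c w w).re)
    {v : ℕ → H} {x : H} (hvW : ∀ k, v k ∈ S.W θ)
    (hva : Tendsto (fun k => (S.a θ (v k) (v k)).re) atTop (𝓝 0))
    (hvc : Tendsto (fun k => (c (v k - x) (v k - x)).re) atTop (𝓝 0)) :
    CauchySeq v := by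
  obtain ⟨c₁, _, hc₁, hequiv⟩ := S.equivNorm θ hθ
  set g : ℕ → ℝ := fun k => 2 * (C * (S.a θ (v k) (v k)).re + (c (v k - x) (v k - x)).re) / c₁
  refine cauchySeq_of_dist_sq_le (g := g) ?_ fun k l => ?_
  · simpa [g] using ((hva.const_mul C).add hvc).const_mul 2 |>.div_const c₁
  have ha := (S.isSesqForm_a hθ).re_sub_le (S.a_nonneg θ hθ) (v k) (v l)
  have hc' := hc.re_sub_le hc0 (v k - x) (v l - x)
  rw [sub_sub_sub_cancel_right] at hc'
  rw [dist_eq_norm, ← mul_le_mul_iff_right₀ hc₁]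
  calc c₁ * ‖v k - v l‖ ^ 2 ≤ S.nsq θ (v k - v l) := by rw [nsq_eq]; exact (hequiv _).1
    _ ≤ C * (S.a θ (v k - v l) (v k - v l)).re + (c (v k - v l) (v k - v l)).re :=
        hcoer _ (S.sub_mem_W hθ (hvW k) (hvW l))
    _ ≤ c₁ * (g k + g l) := by
        simp only [g, mul_add, mul_div_cancel₀ _ hc₁.ne']
        linarith [mul_le_mul_of_nonneg_left ha hC]

theorem not_tendsto_of_tendsto_a_zero (hθ : θ ∈ S.Θ) {v : ℕ → H} (hvW : ∀ k, v k ∈ S.W θ)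
    (hv1 : ∀ k, S.nsq θ (v k) = 1)
    (hva : Tendsto (fun k => (S.a θ (v k) (v k)).re) atTop (𝓝 0)) (y : H) :
    ¬Tendsto v atTop (𝓝 y) := by
  intro hy
  have hyV : y ∈ S.V θ := by
    refine Complex.ext (tendsto_nhds_unique ?_ hva) (S.a_im θ hθ y)
    exact (Complex.continuous_re.comp (S.continuous_a hθ)).tendsto (y, y) |>.comp
      (hy.prodMk_nhds hy)
  have hy0 : S.ip θ y y = 0 := by
    refine tendsto_nhds_unique ((S.continuous_ip hθ).tendsto (y, y) |>.comp
      (hy.prodMk_nhds tendsto_const_nhds)) ?_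
    simp only [Function.comp_def, hvW _ y hyV, tendsto_const_nhds]
  have hy1 : S.nsq θ y = 1 := by
    refine tendsto_nhds_unique ((Complex.continuous_re.comp (S.continuous_ip hθ)).tendsto (y, y)
      |>.comp (hy.prodMk_nhds hy)) ?_
    simp only [Function.comp_def]
    exact tendsto_const_nhds.congr fun k => (hv1 k).symm
  simp [nsq, hy0] at hy1

end FormFamily

theorem statement17_general
    {n : ℕ} {H : Type*} [NormedAddCommGroup H] [InnerProductSpace ℂ H]
    [CompleteSpace H] (S : FormFamily n H)
    (C : ℝ) (hC : 0 < C)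
    (c : H → H → ℂ)
    (c_addL : ∀ u v w : H, c (u + v) w = c u w + c v w)
    (c_smulL : ∀ (t : ℂ) (u w : H), c (t • u) w = t * c u w)
    (c_addR : ∀ u v w : H, c u (v + w) = c u v + c u w)
    (c_smulR : ∀ (t : ℂ) (u w : H), c u (t • w) = starRingEnd ℂ t * c u w)
    (c_nonneg : ∀ u : H, 0 ≤ (c u u).re)
    (hcpt : ∀ θ ∈ S.Θ, ∀ u : ℕ → H, (∃ B : ℝ, ∀ m : ℕ, S.nrm θ (u m) ≤ B) →
      ∃ φ : ℕ → ℕ, StrictMono φ ∧ ∃ x : H,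
        Filter.Tendsto (fun k => (c (u (φ k) - x) (u (φ k) - x)).re)
          Filter.atTop (nhds 0))
    (hH1' : ∀ θ ∈ S.Θ, ∀ w ∈ S.W θ, S.nsq θ w ≤ C * (S.a θ w w).re + (c w w).re)
 :
    ∀ θ ∈ S.Θ, ∃ νθ : ℝ, 0 < νθ ∧ ∀ w ∈ S.W θ, νθ * S.nsq θ w ≤ (S.a θ w w).re := by
  intro θ hθ
  by_contra! hgap
  obtain ⟨u, huW, hu1, hua⟩ := S.exists_seq_of_not_gap hθ hgap
  obtain ⟨φ, hφ, x, hcx⟩ := hcpt θ hθ u ⟨1, fun m => by simp [FormFamily.nrm, hu1]⟩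
  have hc : IsSesqForm c := ⟨c_addL, c_smulL, c_addR, c_smulR⟩
  have hva := hua.comp hφ.tendsto_atTop
  obtain ⟨y, hy⟩ := cauchySeq_tendsto_of_complete <|
    S.cauchySeq_of_coercive_mod_compact hθ hC.le hc c_nonneg (hH1' θ hθ) (fun k => huW (φ k))
      hva hcx
  exact S.not_tendsto_of_tendsto_a_zero hθ (fun k => huW (φ k)) (fun k => hu1 (φ k)) hva y hy

theorem statement17
    {n : ℕ} (hn : 0 < n) {H : Type*} [NormedAddCommGroup H] [InnerProductSpace ℂ H]
    [CompleteSpace H] (S : FormFamily n H)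
    (K : ℝ) (hK0 : 0 < K)
    (hK : ∀ θ₁ ∈ S.Θ, ∀ θ₂ ∈ S.Θ, ∀ u : H, S.nrm θ₁ u ≤ K * S.nrm θ₂ u)
    (C : ℝ) (hC : 0 < C)
    (c : H → H → ℂ)
    (c_addL : ∀ u v w : H, c (u + v) w = c u w + c v w)
    (c_smulL : ∀ (t : ℂ) (u w : H), c (t • u) w = t * c u w)
    (c_addR : ∀ u v w : H, c u (v + w) = c u v + c u w)
    (c_smulR : ∀ (t : ℂ) (u w : H), c u (t • w) = starRingEnd ℂ t * c u w)
    (c_nonneg : ∀ u : H, 0 ≤ (c u u).re)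
    (c_im : ∀ u : H, (c u u).im = 0)
    (hcpt : ∀ θ ∈ S.Θ, ∀ u : ℕ → H, (∃ B : ℝ, ∀ m : ℕ, S.nrm θ (u m) ≤ B) →
      ∃ φ : ℕ → ℕ, StrictMono φ ∧ ∃ x : H,
        Filter.Tendsto (fun k => (c (u (φ k) - x) (u (φ k) - x)).re)
          Filter.atTop (nhds 0))
    (hH1' : ∀ θ ∈ S.Θ, ∀ w ∈ S.W θ, S.nsq θ w ≤ C * (S.a θ w w).re + (c w w).re)
 :
    ∀ θ ∈ S.Θ, ∃ νθ : ℝ, 0 < νθ ∧ ∀ w ∈ S.W θ, νθ * S.nsq θ w ≤ (S.a θ w w).re :=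
  statement17_general S C hC c c_addL c_smulL c_addR c_smulR c_nonneg hcpt hH1'
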